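/- The two-layer mean-field free energy at ε = 0, namely f̂₀(m₁,m₂) = −m₁²/2 − I(m₁) − m₂²/2 − I(m₂) with entropy I(m) = −((1−m)/2)log((1−m)/2) − ((1+m)/2)log((1+m)/2), satisfies f̂₀(m₁,m₂) ≥ f̂₀(0,0) + c(m₁⁴ + m₂⁴) for some constant c > 0 and all m₁, m₂ ∈ [−1,1]. -/

import Mathlib

noncomputable def entI (m : ℝ) : ℝ :=
  -((1 - m) / 2 * Real.log ((1 - m) / 2)) - (1 + m) / 2 * Real.log ((1 + m) / 2)

noncomputable def fHat₀ (m₁ m₂ : ℝ) : ℝ :=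
  -m₁ ^ 2 / 2 - entI m₁ - m₂ ^ 2 / 2 - entI m₂

/-!
Since `x/2 · log (x/2) = x/2 · log x - x/2 · log 2` (also at `x = 0`), the entropy is
`entI m = log 2 - mulLogSymm m / 2`, so with `c = 1/12` the claim reduces to
`mulLogSymm m ≥ m² + m⁴/6` on `[-1, 1]`. Both sides are even and vanish at `0`, and on `[0, 1)`
the derivative `log (1 + m) - log (1 - m) = 2 artanh m` of the left side dominates the first two
terms `2m + 2m³/3` of its series, which are the derivative of the right side.
-/

open Real Set

noncomputable def mulLogSymm (m : ℝ) : ℝ :=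
  (1 + m) * log (1 + m) + (1 - m) * log (1 - m)

lemma half_mul_log_half (x : ℝ) : x / 2 * log (x / 2) = x / 2 * log x - x / 2 * log 2 := by
  rcases eq_or_ne x 0 with rfl | hx
  · simp
  · rw [log_div hx two_ne_zero]; ring

lemma entI_eq_log_two_sub (m : ℝ) : entI m = log 2 - mulLogSymm m / 2 := by
  rw [entI, mulLogSymm, half_mul_log_half, half_mul_log_half]; ring

@[simp]
lemma mulLogSymm_zero : mulLogSymm 0 = 0 := by simp [mulLogSymm]

lemma mulLogSymm_neg (m : ℝ) : mulLogSymm (-m) = mulLogSymm m := by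
  rw [mulLogSymm, mulLogSymm, sub_neg_eq_add, ← sub_eq_add_neg]; ring

lemma continuous_mulLogSymm : Continuous mulLogSymm :=
  (continuous_mul_log.comp (continuous_const.add continuous_id)).add
    (continuous_mul_log.comp (continuous_const.sub continuous_id))

lemma hasDerivAt_mulLogSymm {x : ℝ} (h₁ : -1 < x) (h₂ : x < 1) :
    HasDerivAt mulLogSymm (log (1 + x) - log (1 - x)) x := by
  have hp := (hasDerivAt_mul_log (by linarith : 1 + x ≠ 0)).comp x
    ((hasDerivAt_id x).const_add 1)
  have hm := (hasDerivAt_mul_log (by linarith : 1 - x ≠ 0)).comp x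
    ((hasDerivAt_id x).const_sub 1)
  exact (hp.add hm).congr_deriv (by ring)

lemma two_mul_add_le_log_sub_log {x : ℝ} (h₀ : 0 ≤ x) (h₁ : x < 1) :
    2 * x + 2 * x ^ 3 / 3 ≤ log (1 + x) - log (1 - x) := by
  have hsum := hasSum_log_sub_log_of_abs_lt_one (abs_lt.2 ⟨by linarith, h₁⟩)
  refine le_of_eq_of_le ?_ (sum_le_hasSum (Finset.range 2) (fun k _ => by positivity) hsum)
  norm_num [Finset.sum_range_succ]
  ring

lemma quartic_le_mulLogSymm_of_nonneg {m : ℝ} (h₀ : 0 ≤ m) (h₁ : m ≤ 1) :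
    m ^ 2 + m ^ 4 / 6 ≤ mulLogSymm m := by
  set g : ℝ → ℝ := fun x => mulLogSymm x - (x ^ 2 + x ^ 4 / 6)
  have hg : MonotoneOn g (Icc 0 1) := by
    refine monotoneOn_of_hasDerivWithinAt_nonneg (convex_Icc 0 1)
      (f' := fun x => log (1 + x) - log (1 - x) - (2 * x + 2 * x ^ 3 / 3))
      (continuous_mulLogSymm.sub (by fun_prop)).continuousOn (fun x hx => ?_) (fun x hx => ?_)
    all_goals rw [interior_Icc] at hx
    · have hpoly := (hasDerivAt_pow 2 x).add ((hasDerivAt_pow 4 x).div_const 6)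
      exact ((hasDerivAt_mulLogSymm (by linarith [hx.1]) hx.2).sub hpoly).hasDerivWithinAt
        |>.congr_deriv (by ring)
    · simpa using two_mul_add_le_log_sub_log hx.1.le hx.2
  have hg_m := hg ⟨le_rfl, zero_le_one⟩ ⟨h₀, h₁⟩ h₀
  simp only [g, mulLogSymm_zero] at hg_m
  linarith

lemma quartic_le_mulLogSymm {m : ℝ} (h : m ∈ Icc (-1 : ℝ) 1) :
    m ^ 2 + m ^ 4 / 6 ≤ mulLogSymm m := by
  rcases le_total 0 m with hm | hm
  · exact quartic_le_mulLogSymm_of_nonneg hm h.2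
  · simpa [mulLogSymm_neg, Even.neg_pow (by decide : Even 4)] using
      quartic_le_mulLogSymm_of_nonneg (neg_nonneg.2 hm) (by linarith [h.1])

lemma entI_le {m : ℝ} (h : m ∈ Icc (-1 : ℝ) 1) :
    entI m ≤ entI 0 - m ^ 2 / 2 - m ^ 4 / 12 := by
  rw [entI_eq_log_two_sub, entI_eq_log_two_sub, mulLogSymm_zero]
  linarith [quartic_le_mulLogSymm h]

theorem fHat₀_quartic_lower_bound :
    ∃ c > (0:ℝ), ∀ m₁ ∈ Set.Icc (-1:ℝ) 1, ∀ m₂ ∈ Set.Icc (-1:ℝ) 1,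
      fHat₀ m₁ m₂ ≥ fHat₀ 0 0 + c * (m₁ ^ 4 + m₂ ^ 4) := by
  refine ⟨1 / 12, by norm_num, fun m₁ hm₁ m₂ hm₂ => ?_⟩
  have h₁ := entI_le hm₁
  have h₂ := entI_le hm₂
  simp only [fHat₀]
  linarith
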